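/- arXiv:0804.0288 — 3 statements merged into one kernel-verified Lean document; each statement's English description precedes it below -/
import Mathlib

section
/- Let Γ be a countable group and Λ a countably infinite group, with Γ acting on Λ by group automorphisms (written g·y for g ∈ Γ, y ∈ Λ). Suppose ζ_n : Λ → P(Γ), n ≥ 1, is a sequence of maps into the probability densities on Γ such that for every n ≥ 1, every g ∈ Γ, and all x, x' ∈ Λ, the limit superior along the cofinite filter on Λ of y ↦ ‖ζ_n(g·y) − g·ζ_n(y)‖₁ + ‖ζ_n(x y x') − ζ_n(y)‖₁ is strictly less than 1/n. Then there exists a single map ζ : Λ → P(Γ) such that for every g ∈ Γ and all x, x' ∈ Λ, ‖ζ(g·y) − g·ζ(y)‖₁ + ‖ζ(x y x') − ζ(y)‖₁ → 0 along the cofinite filter on Λ. -/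
/-!
Take for `ζ'(y)` the Cesàro mean of `ζ_1(y), …, ζ_{r(y)}(y)` for a level function
`r : Λ → ℕ` tending to infinity. Enumerate the test data `(g, x, x')`; the level comes from an
exhaustion of `Λ` by finite sets `W_m`, where `W_{m+1}` contains `W_m`, its images under the
first `m` test permutations `y ↦ g • y`, `y ↦ x * y * x'` and their inverses, and the finitely
many points where one of the first `m` densities violates its `1/n` bound for one of the first
`m` test triples. Then `r` moves by at most one along each test permutation, so replacing one
Cesàro mean by its neighbour costs `O(1/r)`, while at `y` all densities of index below `r(y)`
are good, so the defect of the mean is `O((1 + ∑_{n ≤ r(y)} 1/n) / r(y)) → 0`.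
-/

open Filter Finset Topology

noncomputable section L1

variable {ι : Type*}

structure IsProbDensity (p : ι → ℝ) : Prop where
  nonneg : ∀ h, 0 ≤ p h
  summable : Summable p
  tsum_eq_one : ∑' h, p h = 1

def l1Dist (u v : ι → ℝ) : ℝ := ∑' h, |u h - v h|

def cesaroMean (v : ℕ → ι → ℝ) (r : ℕ) : ι → ℝ :=
  fun h => (∑ n ∈ range r, v n h) / r

lemma l1Dist_nonneg (u v : ι → ℝ) : 0 ≤ l1Dist u v := tsum_nonneg fun _ => abs_nonneg _

lemma l1Dist_comm (u v : ι → ℝ) : l1Dist u v = l1Dist v u := by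
  simp only [l1Dist, abs_sub_comm]

lemma l1Dist_triangle {u v w : ι → ℝ} (hu : Summable u) (hv : Summable v) (hw : Summable w) :
    l1Dist u w ≤ l1Dist u v + l1Dist v w := by
  rw [l1Dist, l1Dist, l1Dist, ← (hu.sub hv).abs.tsum_add (hv.sub hw).abs]
  exact (hu.sub hw).abs.tsum_le_tsum (fun h => abs_sub_le _ _ _)
    ((hu.sub hv).abs.add (hv.sub hw).abs)

lemma IsProbDensity.l1Dist_le_two {u v : ι → ℝ} (hu : IsProbDensity u) (hv : IsProbDensity v) :
    l1Dist u v ≤ 2 := by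
  calc l1Dist u v ≤ ∑' h, (u h + v h) :=
        (hu.summable.sub hv.summable).abs.tsum_le_tsum
          (fun h => abs_sub_le_of_nonneg_of_le (hu.nonneg h) (by linarith [hv.nonneg h])
            (hv.nonneg h) (by linarith [hu.nonneg h]))
          (hu.summable.add hv.summable)
    _ = 2 := by rw [hu.summable.tsum_add hv.summable, hu.tsum_eq_one, hv.tsum_eq_one]; norm_num

lemma IsProbDensity.comp_mul_left {Γ : Type*} [Group Γ] {p : Γ → ℝ} (hp : IsProbDensity p)
    (g : Γ) : IsProbDensity (fun h => p (g * h)) where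
  nonneg _ := hp.nonneg _
  summable := (Equiv.mulLeft g).summable_iff.2 hp.summable
  tsum_eq_one := ((Equiv.mulLeft g).tsum_eq p).trans hp.tsum_eq_one

lemma isProbDensity_cesaroMean {v : ℕ → ι → ℝ} (hv : ∀ n, IsProbDensity (v n)) {r : ℕ}
    (hr : 0 < r) : IsProbDensity (cesaroMean v r) where
  nonneg h := div_nonneg (sum_nonneg fun n _ => (hv n).nonneg h) r.cast_nonneg
  summable := (summable_sum fun n _ => (hv n).summable).div_const _
  tsum_eq_one := by
    change ∑' h, (∑ n ∈ range r, v n h) / r = 1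
    rw [tsum_div_const, Summable.tsum_finsetSum fun n _ => (hv n).summable]
    simp [fun n => (hv n).tsum_eq_one, hr.ne']

lemma l1Dist_cesaroMean_le {u v : ℕ → ι → ℝ} (hu : ∀ n, Summable (u n))
    (hv : ∀ n, Summable (v n)) (r : ℕ) :
    l1Dist (cesaroMean u r) (cesaroMean v r) ≤ (∑ n ∈ range r, l1Dist (u n) (v n)) / r := by
  have hsummable (n : ℕ) : Summable fun h => |u n h - v n h| := ((hu n).sub (hv n)).abs
  simp only [l1Dist, cesaroMean, ← sub_div, ← sum_sub_distrib, abs_div, Nat.abs_cast]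
  rw [← Summable.tsum_finsetSum fun n _ => hsummable n, ← tsum_div_const]
  refine ((summable_sum fun n _ => (hu n).sub (hv n)).abs.div_const _).tsum_le_tsum
    (fun h => ?_) ((summable_sum fun n _ => hsummable n).div_const _)
  gcongr
  exact abs_sum_le_sum_abs _ _

lemma cesaroMean_succ_sub (v : ℕ → ι → ℝ) (r : ℕ) (h : ι) :
    cesaroMean v (r + 1) h - cesaroMean v r h = (v r h - cesaroMean v r h) / (r + 1) := by
  rcases r.eq_zero_or_pos with rfl | hr
  · simp [cesaroMean]
  simp only [cesaroMean, sum_range_succ, Nat.cast_succ]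
  field_simp
  ring

lemma l1Dist_cesaroMean_succ (v : ℕ → ι → ℝ) (r : ℕ) :
    l1Dist (cesaroMean v (r + 1)) (cesaroMean v r) = l1Dist (v r) (cesaroMean v r) / (r + 1) := by
  simp only [l1Dist, cesaroMean_succ_sub, abs_div, tsum_div_const]
  rw [abs_of_pos (by positivity)]

lemma l1Dist_cesaroMean_le_of_le_succ {v : ℕ → ι → ℝ} (hv : ∀ n, IsProbDensity (v n))
    {a b : ℕ} (ha : 0 < a) (hb : 0 < b) (hab : a ≤ b + 1) (hba : b ≤ a + 1) :
    l1Dist (cesaroMean v a) (cesaroMean v b) ≤ 2 / b := by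
  rcases (by omega : a = b + 1 ∨ a = b ∨ b = a + 1) with rfl | rfl | rfl
  · rw [l1Dist_cesaroMean_succ]
    calc l1Dist (v b) (cesaroMean v b) / (b + 1) ≤ 2 / (b + 1) := by
          gcongr; exact (hv b).l1Dist_le_two (isProbDensity_cesaroMean hv hb)
      _ ≤ 2 / b := by gcongr; linarith
  · simp [l1Dist]; positivity
  · rw [l1Dist_comm, l1Dist_cesaroMean_succ, Nat.cast_succ]
    gcongr
    exact (hv a).l1Dist_le_two (isProbDensity_cesaroMean hv ha)

lemma l1Dist_cesaroMean_le_of_forall_lt {u v : ℕ → ι → ℝ} (hu : ∀ n, IsProbDensity (u n))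
    (hv : ∀ n, IsProbDensity (v n)) {a b : ℕ} (ha : 0 < a) (hb : 0 < b) (hab : a ≤ b + 1)
    (hba : b ≤ a + 1) {c : ℕ → ℝ} (hc : ∀ n, 0 ≤ c n)
    (huv : ∀ n, n + 1 < b → l1Dist (u n) (v n) ≤ c n) :
    l1Dist (cesaroMean u a) (cesaroMean v b) ≤ (4 + ∑ n ∈ range b, c n) / b := by
  obtain ⟨m, rfl⟩ := Nat.exists_eq_add_one_of_ne_zero hb.ne'
  have hsum : ∑ n ∈ range (m + 1), l1Dist (u n) (v n) ≤ ∑ n ∈ range (m + 1), c n + 2 := by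
    rw [sum_range_succ, sum_range_succ]
    have : ∑ n ∈ range m, l1Dist (u n) (v n) ≤ ∑ n ∈ range m, c n :=
      sum_le_sum fun n hn => huv n (by rw [mem_range] at hn; omega)
    linarith [(hu m).l1Dist_le_two (hv m), hc m]
  have hsummable {w : ℕ → ι → ℝ} (hw : ∀ n, IsProbDensity (w n)) (r : ℕ) :
      Summable (cesaroMean w r) :=
    (summable_sum fun n _ => (hw n).summable).div_const _
  calc l1Dist (cesaroMean u a) (cesaroMean v (m + 1))
      ≤ l1Dist (cesaroMean u a) (cesaroMean u (m + 1)) +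
          l1Dist (cesaroMean u (m + 1)) (cesaroMean v (m + 1)) :=
        l1Dist_triangle (hsummable hu a) (hsummable hu _) (hsummable hv _)
    _ ≤ 2 / (m + 1 : ℕ) + (∑ n ∈ range (m + 1), c n + 2) / (m + 1 : ℕ) := by
        gcongr
        · exact l1Dist_cesaroMean_le_of_le_succ hu ha hb hab hba
        · exact (l1Dist_cesaroMean_le (fun n => (hu n).summable) (fun n => (hv n).summable)
            _).trans (by gcongr)
    _ = (4 + ∑ n ∈ range (m + 1), c n) / (m + 1 : ℕ) := by ring

end L1

lemma tendsto_four_add_harmonic_div_atTop :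
    Tendsto (fun b : ℕ => (4 + ∑ n ∈ range b, 1 / ((n : ℝ) + 1)) / b) atTop (𝓝 0) := by
  have := (tendsto_const_div_atTop_nhds_zero_nat 4).add
    tendsto_one_div_add_atTop_nhds_zero_nat.cesaro
  simpa only [add_zero, add_div, div_eq_inv_mul (∑ n ∈ range _, _)] using this

section Exhaustion

variable {Λ J : Type*} (cΛ : Λ → ℕ) (cJ : J → ℕ) (e : J → Equiv.Perm Λ) (B : ℕ → Set Λ)

def exhaustion : ℕ → Set Λ
  | 0 => ∅
  | m + 1 => exhaustion m ∪ cΛ ⁻¹' {m} ∪ B m ∪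
      ⋃ (j) (_ : cJ j ≤ m), (e j '' exhaustion m ∪ (e j).symm '' exhaustion m)

variable {cΛ cJ e B}

lemma finite_exhaustion (hΛ : cΛ.Injective) (hJ : cJ.Injective) (hB : ∀ k, (B k).Finite) :
    ∀ m, (exhaustion cΛ cJ e B m).Finite
  | 0 => Set.finite_empty
  | m + 1 => by
    have ih := finite_exhaustion hΛ hJ hB m
    refine ((ih.union ((Set.finite_singleton m).preimage hΛ.injOn)).union (hB m)).union ?_
    exact ((Set.finite_Iic m).preimage hJ.injOn).biUnion fun j _ =>
      (ih.image _).union (ih.image _)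

lemma monotone_exhaustion : Monotone (exhaustion cΛ cJ e B) :=
  monotone_nat_of_le_succ fun _ _ hy => .inl (.inl (.inl hy))

lemma mem_exhaustion_succ_self (y : Λ) : y ∈ exhaustion cΛ cJ e B (cΛ y + 1) :=
  .inl (.inl (.inr rfl))

lemma subset_exhaustion_succ (k : ℕ) : B k ⊆ exhaustion cΛ cJ e B (k + 1) :=
  fun _ hy => .inl (.inr hy)

lemma apply_mem_exhaustion_succ {j : J} {m : ℕ} {y : Λ} (hj : cJ j ≤ m)
    (hy : y ∈ exhaustion cΛ cJ e B m) :
    e j y ∈ exhaustion cΛ cJ e B (m + 1) ∧ (e j).symm y ∈ exhaustion cΛ cJ e B (m + 1) := by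
  refine ⟨.inr ?_, .inr ?_⟩ <;> refine Set.mem_biUnion (x := j) hj ?_
  exacts [.inl ⟨y, hy, rfl⟩, .inr ⟨y, hy, rfl⟩]

end Exhaustion

theorem exists_slowlyVarying_level {Λ J : Type*} [Countable Λ] [Countable J]
    (e : J → Equiv.Perm Λ) (B : ℕ → Set Λ) (hB : ∀ k, (B k).Finite) :
    ∃ r : Λ → ℕ, Tendsto r cofinite atTop ∧ (∀ y, 0 < r y) ∧ (∀ k, ∀ y ∈ B k, r y ≤ k + 1) ∧
      ∀ j, ∀ᶠ y in cofinite, r (e j y) ≤ r y + 1 ∧ r y ≤ r (e j y) + 1 := by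
  classical
  obtain ⟨cΛ, hΛ⟩ := Countable.exists_injective_nat Λ
  obtain ⟨cJ, hJ⟩ := Countable.exists_injective_nat J
  set W := exhaustion cΛ cJ e B
  have hex (y : Λ) : ∃ m, y ∈ W m := ⟨_, mem_exhaustion_succ_self y⟩
  set r : Λ → ℕ := fun y => Nat.find (hex y)
  have hr_le {y : Λ} {m : ℕ} : r y ≤ m ↔ y ∈ W m :=
    ⟨fun h => monotone_exhaustion h (Nat.find_spec (hex y)), fun h => Nat.find_min' _ h⟩
  have hr : Tendsto r cofinite atTop := by
    refine tendsto_atTop.2 fun m => eventually_cofinite.2 ?_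
    exact (finite_exhaustion hΛ hJ hB m).subset fun y hy => hr_le.1 (not_le.1 hy).le
  have hr_perm (j : J) (y : Λ) (hj : cJ j ≤ r y) :
      r (e j y) ≤ r y + 1 ∧ r ((e j).symm y) ≤ r y + 1 :=
    (apply_mem_exhaustion_succ hj (hr_le.1 le_rfl)).imp hr_le.2 hr_le.2
  refine ⟨r, hr, fun y => Nat.pos_of_ne_zero fun h => ?_, fun k y hy => hr_le.2
    (subset_exhaustion_succ k hy), fun j => ?_⟩
  · simpa [W, exhaustion] using hr_le.1 h.le
  filter_upwards [hr.eventually_ge_atTop (cJ j),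
    (hr.comp (e j).injective.tendsto_cofinite).eventually_ge_atTop (cJ j)] with y hy hey
  refine ⟨(hr_perm j y hy).1, ?_⟩
  simpa using (hr_perm j (e j y) hey).2

lemma finite_setOf_le_of_limsup_lt {α : Type*} {f : α → ℝ} {c : ℝ}
    (hf : IsBoundedUnder (· ≤ ·) cofinite f) (h : limsup f cofinite < c) :
    {y | c ≤ f y}.Finite := by
  simpa only [eventually_cofinite, not_lt] using eventually_lt_of_limsup_lt h hf

section Defect

variable {Γ Λ : Type*} [Group Γ] [Mul Λ] [MulAction Γ Λ]

noncomputable def invarianceDefect (ζ : Λ → Γ → ℝ) (g : Γ) (x x' y : Λ) : ℝ :=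
  l1Dist (ζ (g • y)) (fun h => ζ y (g⁻¹ * h)) + l1Dist (ζ (x * y * x')) (ζ y)

lemma invarianceDefect_nonneg (ζ : Λ → Γ → ℝ) (g : Γ) (x x' y : Λ) :
    0 ≤ invarianceDefect ζ g x x' y :=
  add_nonneg (l1Dist_nonneg _ _) (l1Dist_nonneg _ _)

lemma invarianceDefect_le_four {ζ : Λ → Γ → ℝ} (hζ : ∀ y, IsProbDensity (ζ y)) (g : Γ)
    (x x' y : Λ) : invarianceDefect ζ g x x' y ≤ 4 := by
  have h₁ := (hζ (g • y)).l1Dist_le_two ((hζ y).comp_mul_left g⁻¹)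
  have h₂ := (hζ (x * y * x')).l1Dist_le_two (hζ y)
  rw [invarianceDefect]
  linarith

lemma tendsto_invarianceDefect_cesaroMean {ζ : ℕ → Λ → Γ → ℝ}
    (hζ : ∀ n y, IsProbDensity (ζ n y)) {r : Λ → ℕ} (hr : Tendsto r cofinite atTop)
    (hr_pos : ∀ y, 0 < r y) {g : Γ} {x x' : Λ}
    (hg : ∀ᶠ y in cofinite, r (g • y) ≤ r y + 1 ∧ r y ≤ r (g • y) + 1)
    (hx : ∀ᶠ y in cofinite, r (x * y * x') ≤ r y + 1 ∧ r y ≤ r (x * y * x') + 1)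
    (hgood : ∀ᶠ y in cofinite, ∀ n, n + 1 < r y →
      invarianceDefect (ζ n) g x x' y ≤ 1 / ((n : ℝ) + 1)) :
    Tendsto (invarianceDefect (fun y => cesaroMean (fun n => ζ n y) (r y)) g x x')
      cofinite (𝓝 0) := by
  refine tendsto_of_tendsto_of_tendsto_of_le_of_le' tendsto_const_nhds
    (by simpa only [mul_zero] using (tendsto_four_add_harmonic_div_atTop.comp hr).const_mul 2)
    (.of_forall fun y => invarianceDefect_nonneg _ g x x' y) ?_
  filter_upwards [hg, hx, hgood] with y ⟨hg₁, hg₂⟩ ⟨hx₁, hx₂⟩ hy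
  have hc (n : ℕ) : 0 ≤ 1 / ((n : ℝ) + 1) := by positivity
  have h₁ := l1Dist_cesaroMean_le_of_forall_lt (fun n => hζ n (g • y))
    (fun n => (hζ n y).comp_mul_left g⁻¹) (hr_pos _) (hr_pos y) hg₁ hg₂ hc
    fun n hn => (le_add_of_nonneg_right (l1Dist_nonneg _ _)).trans (hy n hn)
  have h₂ := l1Dist_cesaroMean_le_of_forall_lt (fun n => hζ n (x * y * x')) (fun n => hζ n y)
    (hr_pos _) (hr_pos y) hx₁ hx₂ hc
    fun n hn => (le_add_of_nonneg_left (l1Dist_nonneg _ _)).trans (hy n hn)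
  rw [invarianceDefect, Function.comp_apply, two_mul]
  exact add_le_add h₁ h₂

end Defect

theorem stmt_5_general {Γ Λ : Type*} [Group Γ] [Group Λ] [Countable Γ] [Countable Λ]
    [MulDistribMulAction Γ Λ]
    (ζ : ℕ → Λ → Γ → ℝ)
    (hdens : ∀ n y, (∀ h, 0 ≤ ζ n y h) ∧ Summable (ζ n y) ∧ ∑' h, ζ n y h = 1)
    (hlim : ∀ n : ℕ, 1 ≤ n → ∀ (g : Γ) (x x' : Λ),
      Filter.limsup
        (fun y => (∑' h, |ζ n (g • y) h - ζ n y (g⁻¹ * h)|) +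
                  (∑' h, |ζ n (x * y * x') h - ζ n y h|))
        Filter.cofinite < 1 / (n : ℝ)) :
    ∃ ζ' : Λ → Γ → ℝ,
      (∀ y, (∀ h, 0 ≤ ζ' y h) ∧ Summable (ζ' y) ∧ ∑' h, ζ' y h = 1) ∧
      (∀ (g : Γ) (x x' : Λ),
        Filter.Tendsto
          (fun y => (∑' h, |ζ' (g • y) h - ζ' y (g⁻¹ * h)|) +
                    (∑' h, |ζ' (x * y * x') h - ζ' y h|))
          Filter.cofinite (nhds 0)) := by
  have hζ (n : ℕ) (y : Λ) : IsProbDensity (ζ n y) :=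
    ⟨(hdens n y).1, (hdens n y).2.1, (hdens n y).2.2⟩
  obtain ⟨t, ht⟩ := exists_surjective_nat (Γ × Λ × Λ)
  let bad (n k : ℕ) : Set Λ :=
    {y | 1 / ((n + 1 : ℕ) : ℝ) ≤ invarianceDefect (ζ (n + 1)) (t k).1 (t k).2.1 (t k).2.2 y}
  have hbad (n k : ℕ) : (bad n k).Finite :=
    finite_setOf_le_of_limsup_lt (isBoundedUnder_of ⟨4, invarianceDefect_le_four (hζ _) _ _ _⟩)
      (hlim (n + 1) n.succ_pos _ _ _)
  let e : Γ ⊕ (Λ × Λ) → Equiv.Perm Λ :=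
    Sum.elim MulAction.toPerm fun p => (Equiv.mulLeft p.1).trans (Equiv.mulRight p.2)
  obtain ⟨r, hr, hr_pos, hr_bad, hr_e⟩ := exists_slowlyVarying_level e
    (fun m => ⋃ n ≤ m, ⋃ k ≤ m, bad n k) fun m =>
      (Set.finite_le_nat m).biUnion fun n _ => (Set.finite_le_nat m).biUnion fun k _ => hbad n k
  refine ⟨fun y => cesaroMean (fun n => ζ (n + 1) y) (r y), fun y => ?_, fun g x x' => ?_⟩
  · have h := isProbDensity_cesaroMean (fun n => hζ (n + 1) y) (hr_pos y)
    exact ⟨h.nonneg, h.summable, h.tsum_eq_one⟩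
  obtain ⟨k, hk⟩ := ht (g, x, x')
  refine tendsto_invarianceDefect_cesaroMean (fun n => hζ (n + 1)) hr hr_pos
    (hr_e (.inl g)) (hr_e (.inr (x, x'))) ?_
  filter_upwards [hr.eventually_gt_atTop (k + 1)] with y hk_lt n hn
  by_contra! hlt
  have hmem : y ∈ bad n k := by
    change (_ : ℝ) ≤ _
    rw [hk]
    push_cast
    exact hlt.le
  have := hr_bad (max n k) y (Set.mem_biUnion (le_max_left n k)
    (Set.mem_biUnion (le_max_right n k) hmem))
  omega

/-- Let `Γ` be a countable group and `Λ` a countably infinite group, with `Γ`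
acting on `Λ` by group automorphisms. If `ζ_n : Λ → P(Γ)` (`n ≥ 1`) satisfy
`limsup_{y→∞} (‖ζ_n(g·y) − g·ζ_n(y)‖₁ + ‖ζ_n(x y x') − ζ_n(y)‖₁) < 1/n` for all
`g ∈ Γ`, `x, x' ∈ Λ`, then there is a single `ζ : Λ → P(Γ)` with
`‖ζ(g·y) − g·ζ(y)‖₁ + ‖ζ(x y x') − ζ(y)‖₁ → 0` along the cofinite filter. -/
theorem stmt_5 {Γ Λ : Type*} [Group Γ] [Group Λ] [Countable Γ] [Countable Λ]
    [Infinite Λ] [MulDistribMulAction Γ Λ]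
    (ζ : ℕ → Λ → Γ → ℝ)
    (hdens : ∀ n y, (∀ h, 0 ≤ ζ n y h) ∧ Summable (ζ n y) ∧ ∑' h, ζ n y h = 1)
    (hlim : ∀ n : ℕ, 1 ≤ n → ∀ (g : Γ) (x x' : Λ),
      Filter.limsup
        (fun y => (∑' h, |ζ n (g • y) h - ζ n y (g⁻¹ * h)|) +
                  (∑' h, |ζ n (x * y * x') h - ζ n y h|))
        Filter.cofinite < 1 / (n : ℝ)) :
    ∃ ζ' : Λ → Γ → ℝ,
      (∀ y, (∀ h, 0 ≤ ζ' y h) ∧ Summable (ζ' y) ∧ ∑' h, ζ' y h = 1) ∧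
      (∀ (g : Γ) (x x' : Λ),
        Filter.Tendsto
          (fun y => (∑' h, |ζ' (g • y) h - ζ' y (g⁻¹ * h)|) +
                    (∑' h, |ζ' (x * y * x') h - ζ' y h|))
          Filter.cofinite (nhds 0)) :=
  stmt_5_general ζ hdens hlim
end

section
/- Let E be a normed real vector space, let (μ_n) and (ν_n) be sequences in E with ‖μ_n‖ ≤ 1 and ‖ν_n‖ ≤ 1 for all n, let ε ≥ 0 and k ∈ ℕ, and suppose ‖μ_n − ν_n‖ ≤ ε for all n ≥ k. Then for all natural numbers N, M with N ≥ 2 and |N − M| ≤ 1, one has ‖ (1/N) ∑_{n=0}^{N−1} μ_n − (1/M) ∑_{n=0}^{M−1} ν_n ‖ ≤ ε + (2k + 4)/N. -/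
/-!
Write `N⁻¹ • A - M⁻¹ • C = N⁻¹ • (A - C) + (N⁻¹ - M⁻¹) • C` for the partial sums `A` of `μ` and
`C` of `ν`. Comparing `A` with the partial sum of `ν` of the same length costs `2` for each of the
first `k` terms and `ε` for each later one, and changing the length by at most one costs `1`; the
second term is at most `|N - M| / (N M) * M ≤ 1 / N` because `‖C‖ ≤ M`.
-/

open Finset

section CesaroAverages

variable {E : Type*} [SeminormedAddCommGroup E]

theorem norm_sum_range_sub_sum_range_le_of_forall_ge {μ ν : ℕ → E}
    (hμ : ∀ n, ‖μ n‖ ≤ 1) (hν : ∀ n, ‖ν n‖ ≤ 1) {ε : ℝ} {k : ℕ}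
    (hk : ∀ n, k ≤ n → ‖μ n - ν n‖ ≤ ε) (N : ℕ) :
    ‖∑ n ∈ range N, μ n - ∑ n ∈ range N, ν n‖ ≤ 2 * k + N * ε := by
  have hε : 0 ≤ ε := (norm_nonneg _).trans (hk k le_rfl)
  have hterm : ∀ n, ‖μ n - ν n‖ ≤ 2 * (if n < k then 1 else 0) + ε := fun n => by
    split_ifs with h
    · linarith [norm_sub_le (μ n) (ν n), hμ n, hν n]
    · linarith [hk n (not_lt.mp h)]
  have hcount : (#{n ∈ range N | n < k} : ℝ) ≤ k := by
    have hsub : {n ∈ range N | n < k} ⊆ range k := fun n hn => by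
      simp only [mem_filter, mem_range] at hn ⊢
      exact hn.2
    exact_mod_cast (card_le_card hsub).trans (card_range k).le
  rw [← sum_sub_distrib]
  calc _ ≤ ∑ n ∈ range N, (2 * (if n < k then 1 else 0 : ℝ) + ε) :=
        norm_sum_le_of_le _ fun n _ => hterm n
    _ = 2 * #{n ∈ range N | n < k} + N * ε := by
        rw [sum_add_distrib, ← mul_sum, sum_boole, sum_const, card_range, nsmul_eq_mul]
    _ ≤ 2 * k + N * ε := by linarith

theorem norm_sum_range_sub_sum_range_le {ν : ℕ → E} (hν : ∀ n, ‖ν n‖ ≤ 1) (N M : ℕ) :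
    ‖∑ n ∈ range N, ν n - ∑ n ∈ range M, ν n‖ ≤ |(N : ℝ) - M| := by
  wlog h : M ≤ N generalizing N M
  · rw [norm_sub_rev, abs_sub_comm]
    exact this M N (le_of_not_ge h)
  rw [← sum_Ico_eq_sub _ h, abs_of_nonneg (by simpa using h), ← Nat.cast_sub h, ← Nat.card_Ico]
  simpa using norm_sum_le_of_le (Ico M N) fun n _ => hν n

theorem norm_inv_smul_sub_inv_smul_le [NormedSpace ℝ E] {a b : ℝ} (ha : 0 < a) (hb : 0 < b)
    (x : E) {y : E} (hy : ‖y‖ ≤ b) :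
    ‖a⁻¹ • x - b⁻¹ • y‖ ≤ (‖x - y‖ + |a - b|) / a := by
  have hsplit : a⁻¹ • x - b⁻¹ • y = a⁻¹ • (x - y) + (a⁻¹ - b⁻¹) • y := by
    simp only [smul_sub, sub_smul]
    abel
  have hcoef : |a⁻¹ - b⁻¹| * b = |a - b| / a := by
    rw [inv_sub_inv ha.ne' hb.ne', abs_div, abs_of_pos (mul_pos ha hb), abs_sub_comm]
    field_simp
  calc ‖a⁻¹ • x - b⁻¹ • y‖ ≤ ‖a⁻¹ • (x - y)‖ + ‖(a⁻¹ - b⁻¹) • y‖ := hsplit ▸ norm_add_le _ _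
    _ = a⁻¹ * ‖x - y‖ + |a⁻¹ - b⁻¹| * ‖y‖ := by
        rw [norm_smul, norm_smul, Real.norm_of_nonneg (inv_nonneg.2 ha.le), Real.norm_eq_abs]
    _ ≤ a⁻¹ * ‖x - y‖ + |a⁻¹ - b⁻¹| * b := by gcongr
    _ = (‖x - y‖ + |a - b|) / a := by rw [hcoef]; ring

end CesaroAverages

theorem stmt_7_general {E : Type*} [NormedAddCommGroup E] [NormedSpace ℝ E]
    (μ ν : ℕ → E) (hμ : ∀ n, ‖μ n‖ ≤ 1) (hν : ∀ n, ‖ν n‖ ≤ 1)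
    (ε : ℝ) (k : ℕ) (hk : ∀ n, k ≤ n → ‖μ n - ν n‖ ≤ ε)
    (N M : ℕ) (hN : 2 ≤ N) (hNM : |(N : ℤ) - (M : ℤ)| ≤ 1) :
    ‖(N : ℝ)⁻¹ • ∑ n ∈ Finset.range N, μ n -
      (M : ℝ)⁻¹ • ∑ n ∈ Finset.range M, ν n‖ ≤ ε + (2 * k + 4) / N := by
  have hN0 : (0 : ℝ) < N := Nat.cast_pos.2 (by omega)
  have hM0 : (0 : ℝ) < M := Nat.cast_pos.2 (by have := (abs_le.mp hNM).2; omega)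
  have hgap : |(N : ℝ) - M| ≤ 1 := by exact_mod_cast hNM
  have hνM : ‖∑ n ∈ range M, ν n‖ ≤ M := by
    simpa using norm_sum_le_of_le (range M) fun n _ => hν n
  have hsums : ‖∑ n ∈ range N, μ n - ∑ n ∈ range M, ν n‖ ≤ 2 * k + N * ε + 1 :=
    (norm_sub_le_norm_sub_add_norm_sub _ (∑ n ∈ range N, ν n) _).trans <| by
      linarith [norm_sum_range_sub_sum_range_le_of_forall_ge hμ hν hk N,
        norm_sum_range_sub_sum_range_le hν N M]
  calc _ ≤ (‖∑ n ∈ range N, μ n - ∑ n ∈ range M, ν n‖ + |(N : ℝ) - M|) / N :=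
        norm_inv_smul_sub_inv_smul_le hN0 hM0 _ hνM
    _ ≤ (2 * k + N * ε + 2) / N := by gcongr ?_ / _; linarith
    _ = ε + (2 * k + 2) / N := by field_simp; ring
    _ ≤ ε + (2 * k + 4) / N := by gcongr; norm_num

/-- Cesàro-averaging estimate: if `(μ_n)`, `(ν_n)` are sequences in a normed
real vector space with `‖μ_n‖ ≤ 1`, `‖ν_n‖ ≤ 1`, and `‖μ_n − ν_n‖ ≤ ε` for all
`n ≥ k`, then for `N ≥ 2` and `|N − M| ≤ 1`,
`‖(1/N)∑_{n<N} μ_n − (1/M)∑_{n<M} ν_n‖ ≤ ε + (2k + 4)/N`. -/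
theorem stmt_7 {E : Type*} [NormedAddCommGroup E] [NormedSpace ℝ E]
    (μ ν : ℕ → E) (hμ : ∀ n, ‖μ n‖ ≤ 1) (hν : ∀ n, ‖ν n‖ ≤ 1)
    (ε : ℝ) (hε : 0 ≤ ε) (k : ℕ) (hk : ∀ n, k ≤ n → ‖μ n - ν n‖ ≤ ε)
    (N M : ℕ) (hN : 2 ≤ N) (hNM : |(N : ℤ) - (M : ℤ)| ≤ 1) :
    ‖(N : ℝ)⁻¹ • ∑ n ∈ Finset.range N, μ n -
      (M : ℝ)⁻¹ • ∑ n ∈ Finset.range M, ν n‖ ≤ ε + (2 * k + 4) / N :=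
  stmt_7_general μ ν hμ hν ε k hk N M hN hNM
end

section
/- The group SL(2,ℤ) is virtually free: there exists a subgroup H of SL(2,ℤ) of finite index such that H is a free group. -/
/-!
Sanov: the matrices `A = !![1, 2; 0, 1]` and `B = !![1, 0; 2, 1]` generate a free group, by
ping-pong on `ℤ²` with the sets `|y| < |x|` and `|x| < |y|`: every nonzero power of `A` maps the
second set into the first, and every nonzero power of `B` the first into the second.

Left multiplication by `A^{±1}` or `B^{±1}` adds twice one row to the other. Running the Euclidean
algorithm on the first column `(a, c)` in such steps shows that `⟨A, B⟩` contains every matrix with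
`a ≡ 1 [ZMOD 4]` and `b`, `c` even, in particular the congruence subgroup `Γ(4)`, which has finite
index.
-/

open Matrix MatrixGroups
open scoped Function Pointwise

theorem FreeGroup.injective_lift_of_ping_pong_zpow {ι G α : Type*} [Nontrivial ι] [Group G]
    [MulAction G α] (a : ι → G) (X : ι → Set α) (hX : ∀ i, (X i).Nonempty)
    (hXdisj : Pairwise (Disjoint on X))
    (hpp : Pairwise fun i j => ∀ k : ℤ, k ≠ 0 → a i ^ k • X j ⊆ X i) :
    Function.Injective (FreeGroup.lift a) := by
  have hlift : FreeGroup.lift a = (Monoid.CoprodI.lift fun i => FreeGroup.lift fun _ => a i).comp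
      freeGroupEquivCoprodI.toMonoidHom := by
    ext i; simp
  rw [hlift, MonoidHom.coe_comp]
  refine Function.Injective.comp ?_ freeGroupEquivCoprodI.injective
  refine Monoid.CoprodI.lift_injective_of_ping_pong _ ?_ X hX hXdisj ?_
  · inhabit ι
    refine Or.inr ⟨default, ?_⟩
    rw [FreeGroup.freeGroupUnitEquivInt.cardinal_eq, Cardinal.mk_denumerable]
    exact Cardinal.natCast_le_aleph0
  · intro i j hij h hh
    obtain ⟨k, rfl⟩ : ∃ k : ℤ, FreeGroup.of () ^ k = h :=
      ⟨_, FreeGroup.freeGroupUnitEquivInt.left_inv h⟩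
    simpa using hpp hij k (by rintro rfl; simp at hh)

namespace Matrix.SpecialLinearGroup

variable {ι F : Type*} [DecidableEq ι] [Fintype ι] [CommRing F] {i j : ι}

lemma transvection_zpow (hij : i ≠ j) (b : F) (k : ℤ) :
    transvection hij b ^ k = transvection hij (k • b) := by
  induction k using Int.induction_on with
  | zero => simp
  | succ k ih => rw [_root_.zpow_add_one, ih, ← transvection_add, add_zsmul, one_zsmul]
  | pred k ih =>
    rw [_root_.zpow_sub_one, ih, transvection_inv, ← transvection_add, sub_zsmul, one_zsmul]

@[simp]
lemma transvection_mul_apply_same (hij : i ≠ j) (b : F) (M : SpecialLinearGroup ι F) (l : ι) :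
    (transvection hij b * M) i l = M i l + b * M j l :=
  Matrix.transvection_mul_apply_same i j l b M.1

@[simp]
lemma transvection_mul_apply_of_ne (hij : i ≠ j) (b : F) (M : SpecialLinearGroup ι F) {m : ι}
    (hm : m ≠ i) (l : ι) : (transvection hij b * M) m l = M m l :=
  Matrix.transvection_mul_apply_of_ne i j m l hm b M.1

@[simp]
lemma transvection_smul_apply_same (hij : i ≠ j) (b : F) (v : ι → F) :
    (transvection hij b • v) i = v i + b * v j := by
  simp [SpecialLinearGroup.smul_def, transvection_coe, mulVec, dotProduct, single_apply, add_mul,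
    Finset.sum_add_distrib, one_apply]

@[simp]
lemma transvection_smul_apply_of_ne (hij : i ≠ j) (b : F) (v : ι → F) {m : ι} (hm : m ≠ i) :
    (transvection hij b • v) m = v m := by
  simp [SpecialLinearGroup.smul_def, transvection_coe, mulVec, dotProduct, one_apply, hm.symm]

lemma abs_transvection_zpow_smul_apply_lt [LinearOrder F] [IsStrictOrderedRing F]
    (hij : i ≠ j) {b : F} (hb : 2 ≤ |b|) {k : ℤ} (hk : k ≠ 0) {v : ι → F}
    (hv : |v i| < |v j|) :
    |(transvection hij b ^ k • v) j| < |(transvection hij b ^ k • v) i| := by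
  have hkb : 2 ≤ |k • b| := by
    have hk1 : (1 : F) ≤ |(k : F)| := by exact_mod_cast Int.one_le_abs hk
    rw [zsmul_eq_mul, abs_mul]
    nlinarith [abs_nonneg b]
  rw [transvection_zpow, transvection_smul_apply_same,
    transvection_smul_apply_of_ne hij _ _ hij.symm]
  calc |v j| < 2 * |v j| - |v i| := by linarith
    _ ≤ |k • b| * |v j| - |v i| := by nlinarith [abs_nonneg (v j)]
    _ = |(k • b) * v j| - |v i| := by rw [abs_mul]
    _ ≤ |v i + (k • b) * v j| := by
      rw [add_comm]; exact abs_sub_abs_le_abs_add _ _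

end Matrix.SpecialLinearGroup

open SpecialLinearGroup

section Sanov

variable {F : Type*} [CommRing F] [LinearOrder F] [IsStrictOrderedRing F]

def sanovGenerators (b : F) : Fin 2 → SL(2, F) :=
  ![transvection zero_ne_one b, transvection one_ne_zero b]

theorem injective_lift_sanovGenerators {b : F} (hb : 2 ≤ |b|) :
    Function.Injective (FreeGroup.lift (sanovGenerators b)) := by
  refine FreeGroup.injective_lift_of_ping_pong_zpow _
    (α := Fin 2 → F) ![{v | |v 1| < |v 0|}, {v | |v 0| < |v 1|}] ?_ ?_ ?_
  · intro i
    fin_cases i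
    · exact ⟨![1, 0], by simp⟩
    · exact ⟨![0, 1], by simp⟩
  · intro i j hij
    fin_cases i <;> fin_cases j <;> first
      | exact absurd rfl hij
      | exact Set.disjoint_left.2 fun v h₁ h₂ => lt_asymm h₁ h₂
  · intro i j hij k hk
    fin_cases i <;> fin_cases j
    all_goals first
      | exact absurd rfl hij
      | rintro _ ⟨v, hv, rfl⟩
        simp [sanovGenerators] at hv ⊢
        exact abs_transvection_zpow_smul_apply_lt _ hb hk hv

end Sanov

lemma Int.exists_natAbs_add_two_mul_lt {x y : ℤ} (hy : y ≠ 0) (h : y.natAbs < x.natAbs) :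
    ∃ k : ℤ, (k = 1 ∨ k = -1) ∧ (x + k * 2 * y).natAbs < x.natAbs := by
  rcases le_or_gt 0 x with hx | hx <;> rcases le_or_gt 0 y with hy' | hy' <;>
    first
      | exact ⟨1, Or.inl rfl, by omega⟩
      | exact ⟨-1, Or.inr rfl, by omega⟩

def sanovSubgroup : Subgroup SL(2, ℤ) := (FreeGroup.lift (sanovGenerators (2 : ℤ))).range

lemma sanovGenerators_mem_sanovSubgroup (i : Fin 2) : sanovGenerators 2 i ∈ sanovSubgroup :=
  ⟨FreeGroup.of i, FreeGroup.lift_apply_of⟩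

theorem mem_sanovSubgroup_of_modEq {M : SL(2, ℤ)} (ha : M 0 0 ≡ 1 [ZMOD 4]) (hb : 2 ∣ M 0 1)
    (hc : 2 ∣ M 1 0) : M ∈ sanovSubgroup := by
  induction hn : (M 0 0).natAbs + (M 1 0).natAbs using Nat.strong_induction_on generalizing M with
  | _ n ih =>
  rw [Int.ModEq] at ha
  rcases eq_or_ne (M 1 0) 0 with hc0 | hc0
  · have hdet : M 0 0 * M 1 1 = 1 := by
      have := M.det_coe
      rw [det_fin_two] at this
      simpa [hc0] using this
    have ha1 : M 0 0 = 1 := by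
      rcases Int.eq_one_or_neg_one_of_mul_eq_one hdet with h | h <;> omega
    have hd1 : M 1 1 = 1 := by simpa [ha1] using hdet
    obtain ⟨m, hm⟩ := hb
    have hM : M = sanovGenerators 2 0 ^ m := by
      ext i j
      fin_cases i <;> fin_cases j <;>
        simp [sanovGenerators, transvection_zpow, transvection_coe, one_apply, ha1, hd1, hc0, hm]
      ring
    exact hM ▸ zpow_mem (sanovGenerators_mem_sanovSubgroup 0) m
  -- `a` is odd and `c` even, so `|a| ≠ |c|` and one row can be reduced by the other.
  rcases (show (M 1 0).natAbs ≠ (M 0 0).natAbs by omega).lt_or_gt with hlt | hgt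
  · obtain ⟨k, hk1, hk⟩ := Int.exists_natAbs_add_two_mul_lt hc0 hlt
    refine (sanovSubgroup.mul_mem_cancel_left
      (zpow_mem (sanovGenerators_mem_sanovSubgroup 0) k)).1 (ih _ ?_ ?_ ?_ ?_ rfl) <;>
      simp [sanovGenerators, transvection_zpow, Int.ModEq] <;> rcases hk1 with rfl | rfl <;> omega
  · obtain ⟨k, hk1, hk⟩ := Int.exists_natAbs_add_two_mul_lt (by omega) hgt
    refine (sanovSubgroup.mul_mem_cancel_left
      (zpow_mem (sanovGenerators_mem_sanovSubgroup 1) k)).1 (ih _ ?_ ?_ ?_ ?_ rfl) <;>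
      simp [sanovGenerators, transvection_zpow, Int.ModEq] <;> rcases hk1 with rfl | rfl <;> omega

open CongruenceSubgroup

lemma Gamma_four_le_sanovSubgroup : Γ(4) ≤ sanovSubgroup := by
  intro M hM
  obtain ⟨ha, hb, hc, -⟩ := Gamma_mem.1 hM
  have h4 : (2 : ℤ) ∣ 4 := ⟨2, rfl⟩
  refine mem_sanovSubgroup_of_modEq ?_ (h4.trans ?_) (h4.trans ?_)
  · exact (ZMod.intCast_eq_intCast_iff _ _ 4).1 (by simpa using ha)
  · exact (ZMod.intCast_zmod_eq_zero_iff_dvd _ 4).1 hb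
  · exact (ZMod.intCast_zmod_eq_zero_iff_dvd _ 4).1 hc

/-- `SL(2,ℤ)` is virtually free: it has a finite-index subgroup which is a
free group. -/
theorem stmt_9 :
    ∃ H : Subgroup (Matrix.SpecialLinearGroup (Fin 2) ℤ),
      H.FiniteIndex ∧ ∃ ι : Type, Nonempty (H ≃* FreeGroup ι) := by
  refine ⟨sanovSubgroup, ?_, Fin 2, ⟨?_⟩⟩
  · exact IsCongruenceSubgroup.finiteIndex ⟨4, four_ne_zero, Gamma_four_le_sanovSubgroup⟩
  · exact (MonoidHom.ofInjective (injective_lift_sanovGenerators (by norm_num))).symm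
end
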